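/- On each interval J_k (for 1 < k < m), the boundary function q(p) = ((π − c_k)p − s_k π)/(p − s_k − c_k) is strictly increasing in p, while on J_m it is constant and equal to s_m; consequently q(p) extends continuously to p = π by setting q(π) := s_m, and is nondecreasing on [π, s_1). -/

import Mathlib

open Finset

/-!
Single-group setting.  A finite probability space `(Ω, P)`, a binary target `Y` with
base rate `π := P(Y = 1)`, and a calibrated score `S` taking `m > 1` distinct values
`1 ≥ s_1 > ⋯ > s_m ≥ 0` (here 0-indexed: `s i` is the paper's `s_{i+1}`), each with
positive probability `w i = P(S = s i)`, are—via calibration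
`P(Y = 1 ∣ S = s i) = s i`—completely described, for the purposes of classifiers
based on `S`, by the data below.  A (possibly randomized) binary classifier `R`
based on `S` (i.e. `P(R = 1 ∣ S, Y) = P(R = 1 ∣ S)`) is in turn determined by its
selection rule `t i = P(R = 1 ∣ S = s i)`, with `P(R = 1) = ∑ i, w i * t i`,
`P(Y = 1, R = 1) = ∑ i, s i * w i * t i`, `PPV(R) = P(Y = 1 ∣ R = 1)` and
`FOR(R) = P(Y = 1 ∣ R = 0)` as given below.
-/
structure CalibScore where
  m : ℕ
  s : ℕ → ℝ
  w : ℕ → ℝ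
  one_lt_m : 1 < m
  s_nonneg : ∀ i, i < m → 0 ≤ s i
  s_le_one : ∀ i, i < m → s i ≤ 1
  s_desc : ∀ i j, i < j → j < m → s j < s i
  w_pos : ∀ i, i < m → 0 < w i
  w_sum : ∑ i ∈ Finset.range m, w i = 1

namespace CalibScore

/-- Base rate `π = P(Y = 1) = E[S]` (by calibration). -/
noncomputable def pi (D : CalibScore) : ℝ := ∑ i ∈ Finset.range D.m, D.s i * D.w i

/-- `t` is a selection rule (`t i = P(R = 1 ∣ S = s i)` for a classifier `R` based on `S`). -/
def IsSelRule (D : CalibScore) (t : ℕ → ℝ) : Prop := ∀ i, i < D.m → 0 ≤ t i ∧ t i ≤ 1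

/-- Selection rate `μ = P(R = 1)`. -/
noncomputable def selRate (D : CalibScore) (t : ℕ → ℝ) : ℝ :=
  ∑ i ∈ Finset.range D.m, D.w i * t i

/-- `P(Y = 1, R = 1) = ∑ i, s i * P(S = s i) * P(R = 1 ∣ S = s i)` (by calibration). -/
noncomputable def posSel (D : CalibScore) (t : ℕ → ℝ) : ℝ :=
  ∑ i ∈ Finset.range D.m, D.s i * D.w i * t i

/-- `PPV(R) = P(Y = 1 ∣ R = 1)`. -/
noncomputable def ppv (D : CalibScore) (t : ℕ → ℝ) : ℝ := D.posSel t / D.selRate t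

/-- `FOR(R) = P(Y = 1 ∣ R = 0)`. -/
noncomputable def forr (D : CalibScore) (t : ℕ → ℝ) : ℝ :=
  (D.pi - D.posSel t) / (1 - D.selRate t)

/-- `(p, q)` is feasible with selection rate `μ`: attained by a nonconstant
classifier based on `S` with `P(R = 1) = μ`. -/
def FeasibleWith (D : CalibScore) (μ p q : ℝ) : Prop :=
  0 < μ ∧ μ < 1 ∧ ∃ t, D.IsSelRule t ∧ D.selRate t = μ ∧ D.ppv t = p ∧ D.forr t = q

/-- The feasible region `C`. -/
def Feasible (D : CalibScore) (p q : ℝ) : Prop := ∃ μ, D.FeasibleWith μ p q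

/-- `μ_k = ∑_{i ≤ k} P(S = s_i)` (1-based `k`; `μ_0 = 0`). -/
noncomputable def muk (D : CalibScore) (k : ℕ) : ℝ := ∑ i ∈ Finset.range k, D.w i

/-- `c_k = ∑_{i < k} P(S = s_i) (s_i − s_k)` (1-based `k`). -/
noncomputable def ck (D : CalibScore) (k : ℕ) : ℝ :=
  ∑ i ∈ Finset.range (k - 1), D.w i * (D.s i - D.s (k - 1))

/-- `I_k = (μ_{k−1}, μ_k] ∩ (0, 1)` (1-based `k`). -/
def Ik (D : CalibScore) (k : ℕ) : Set ℝ :=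
  Set.Ioc (D.muk (k - 1)) (D.muk k) ∩ Set.Ioo 0 1

/-- `p*(μ)`: the supremum of `p` over pairs `(p, q)` feasible with `μ` having `q ≤ π ≤ p`. -/
noncomputable def pStar (D : CalibScore) (μ : ℝ) : ℝ :=
  sSup {p | ∃ q, D.FeasibleWith μ p q ∧ q ≤ D.pi ∧ D.pi ≤ p}

/-- `q*(μ)`: the infimum of `q` over pairs `(p, q)` feasible with `μ` having `q ≤ π ≤ p`. -/
noncomputable def qStar (D : CalibScore) (μ : ℝ) : ℝ :=
  sInf {q | ∃ p, D.FeasibleWith μ p q ∧ q ≤ D.pi ∧ D.pi ≤ p}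

/-- `p_k = s_k + c_k / μ_k` (1-based `k`), the breakpoint values of the boundary. -/
noncomputable def pkF (D : CalibScore) (k : ℕ) : ℝ := D.s (k - 1) + D.ck k / D.muk k

/-- The boundary formula `q(p) = ((π − c_k) p − s_k π) / (p − s_k − c_k)` on `J_k`
(1-based `k`). -/
noncomputable def qF (D : CalibScore) (k : ℕ) (p : ℝ) : ℝ :=
  ((D.pi - D.ck k) * p - D.s (k - 1) * D.pi) / (p - D.s (k - 1) - D.ck k)

end CalibScore

/-!
On `J_k` the boundary `q(p) = ((π − c_k) p − s_k π) / (p − (s_k + c_k))` is a Möbius function of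
`p` with determinant `c_k (π − s_k − c_k) < 0` (the scores below `s_k` pull `π` under
`s_k + c_k`), hence increasing to the right of its pole `s_k + c_k`, and `p_k = s_k + c_k / μ_k`
lies there because `μ_k < 1`. For `k = m` one has `c_m = π − s_m`, and the formula collapses to
the constant `s_m`. The pieces glue monotonically because at each breakpoint `p_k` the formulas
of `J_k` and `J_{k+1}` agree.
-/

theorem monotoneOn_Icc_of_monotoneOn_Icc_succ {α β : Type*} [LinearOrder α] [Preorder β]
    {f : α → β} {a : ℕ → α} {n : ℕ} (ha : ∀ k < n, a (k + 1) ≤ a k)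
    (hf : ∀ k < n, MonotoneOn f (Set.Icc (a (k + 1)) (a k))) :
    MonotoneOn f (Set.Icc (a n) (a 0)) := by
  suffices a n ≤ a 0 ∧ MonotoneOn f (Set.Icc (a n) (a 0)) from this.2
  induction n with
  | zero =>
    refine ⟨le_rfl, ?_⟩
    rw [Set.Icc_self]
    exact Set.subsingleton_singleton.monotoneOn f
  | succ n ih =>
    obtain ⟨hn0, hmono⟩ := ih (fun k hk => ha k (by omega)) (fun k hk => hf k (by omega))
    have hsucc := ha n n.lt_succ_self
    refine ⟨hsucc.trans hn0, ?_⟩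
    rw [← Set.Icc_union_Icc_eq_Icc hsucc hn0]
    exact (hf n n.lt_succ_self).union_right hmono (isGreatest_Icc hsucc) (isLeast_Icc hn0)

theorem strictMonoOn_mul_sub_div_sub {a b c : ℝ} (h : a * c < b) :
    StrictMonoOn (fun p => (a * p - b) / (p - c)) (Set.Ioi c) := by
  intro x hx y hy hxy
  rw [div_lt_div_iff₀ (sub_pos.2 hx) (sub_pos.2 hy)]
  nlinarith [mul_pos (sub_pos.2 h) (sub_pos.2 hxy)]

theorem mul_sub_div_sub_eq_of_eq_add_div {P s c μ p : ℝ} (hc : c ≠ 0) (hμ : μ ≠ 0)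
    (hμ1 : μ ≠ 1) (hp : p = s + c / μ) :
    ((P - c) * p - s * P) / (p - s - c) = (P - μ * p) / (1 - μ) := by
  have h1μ : 1 - μ ≠ 0 := sub_ne_zero.2 (Ne.symm hμ1)
  have hden : p - s - c = c * (1 - μ) / μ := by
    rw [hp]; field_simp; ring
  rw [div_eq_div_iff (by rw [hden]; exact div_ne_zero (mul_ne_zero hc h1μ) hμ) h1μ, hp]
  field_simp
  ring

namespace CalibScore

variable (D : CalibScore)

theorem s_le_s {i j : ℕ} (hij : i ≤ j) (hj : j < D.m) : D.s j ≤ D.s i :=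
  hij.eq_or_lt.elim (fun h => h ▸ le_rfl) (fun h => (D.s_desc i j h hj).le)

theorem muk_pos {k : ℕ} (hk : 1 ≤ k) (hkm : k ≤ D.m) : 0 < D.muk k :=
  Finset.sum_pos (fun i hi => D.w_pos i ((Finset.mem_range.1 hi).trans_le hkm))
    ⟨0, Finset.mem_range.2 hk⟩

theorem muk_succ (k : ℕ) : D.muk (k + 1) = D.muk k + D.w k :=
  Finset.sum_range_succ _ _

theorem muk_lt_one {k : ℕ} (hk : k < D.m) : D.muk k < 1 := by
  rw [← D.w_sum]
  exact Finset.sum_lt_sum_of_subset (Finset.range_subset_range.2 hk.le)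
    (Finset.mem_range.2 hk) (by simp) (D.w_pos k hk)
    (fun j hj _ => (D.w_pos j (Finset.mem_range.1 hj)).le)

theorem ck_pos {k : ℕ} (hk : 2 ≤ k) (hkm : k ≤ D.m) : 0 < D.ck k :=
  Finset.sum_pos
    (fun i hi => mul_pos (D.w_pos i (by simp at hi; omega))
      (sub_pos.2 (D.s_desc i (k - 1) (Finset.mem_range.1 hi) (by omega))))
    ⟨0, Finset.mem_range.2 (by omega)⟩

theorem ck_succ {k : ℕ} (hk : 1 ≤ k) :
    D.ck (k + 1) = D.ck k + (D.s (k - 1) - D.s k) * D.muk k := by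
  obtain ⟨j, rfl⟩ : ∃ j, k = j + 1 := ⟨k - 1, by omega⟩
  simp only [ck, muk, Nat.add_sub_cancel, mul_sub, Finset.sum_sub_distrib, ← Finset.sum_mul,
    Finset.sum_range_succ _ j]
  ring

theorem pi_sub_s_eq_sum (j : ℕ) :
    D.pi - D.s j = ∑ i ∈ Finset.range D.m, D.w i * (D.s i - D.s j) := by
  have h : ∀ i, D.w i * (D.s i - D.s j) = D.s i * D.w i - D.s j * D.w i := fun i => by ring
  simp only [h, Finset.sum_sub_distrib, ← Finset.mul_sum, D.w_sum, pi, mul_one]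

theorem pi_sub_s_sub_ck {k : ℕ} (hk : k - 1 ≤ D.m) :
    D.pi - D.s (k - 1) - D.ck k =
      ∑ i ∈ Finset.Ico (k - 1) D.m, D.w i * (D.s i - D.s (k - 1)) := by
  rw [D.pi_sub_s_eq_sum, ck, ← Finset.sum_range_add_sum_Ico _ hk]
  ring

theorem ck_m : D.ck D.m = D.pi - D.s (D.m - 1) := by
  have h := D.pi_sub_s_sub_ck (k := D.m) (by omega)
  obtain ⟨n, hn⟩ : ∃ n, D.m = n + 1 := ⟨D.m - 1, by have := D.one_lt_m; omega⟩
  rw [hn, Nat.add_sub_cancel, Nat.Ico_succ_singleton, Finset.sum_singleton, sub_self,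
    mul_zero] at h
  rw [hn, Nat.add_sub_cancel]
  linarith

theorem pi_lt_s_add_ck {k : ℕ} (hk : 1 ≤ k) (hkm : k < D.m) : D.pi < D.s (k - 1) + D.ck k := by
  suffices D.pi - D.s (k - 1) - D.ck k < 0 by linarith
  rw [D.pi_sub_s_sub_ck (by omega)]
  refine Finset.sum_neg' (fun i hi => ?_) ⟨k, Finset.mem_Ico.2 ⟨by omega, hkm⟩, ?_⟩
  · obtain ⟨hi1, hi2⟩ := Finset.mem_Ico.1 hi
    exact mul_nonpos_of_nonneg_of_nonpos (D.w_pos i hi2).le (sub_nonpos.2 (D.s_le_s hi1 hi2))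
  · exact mul_neg_of_pos_of_neg (D.w_pos k hkm) (sub_neg.2 (D.s_desc _ _ (by omega) hkm))

theorem pkF_one : D.pkF 1 = D.s 0 := by
  simp [pkF, ck]

theorem pkF_eq_s_add_ck_succ_div {k : ℕ} (hk : 1 ≤ k) (hkm : k ≤ D.m) :
    D.pkF k = D.s k + D.ck (k + 1) / D.muk k := by
  have hμ := (D.muk_pos hk hkm).ne'
  rw [pkF, D.ck_succ hk]
  field_simp
  ring

theorem pkF_succ_lt {k : ℕ} (hk : 1 ≤ k) (hkm : k < D.m) : D.pkF (k + 1) < D.pkF k := by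
  have hlt : D.ck (k + 1) / D.muk (k + 1) < D.ck (k + 1) / D.muk k := by
    refine div_lt_div_of_pos_left (D.ck_pos (by omega) hkm) (D.muk_pos hk hkm.le) ?_
    linarith [D.muk_succ k, D.w_pos k hkm]
  rw [D.pkF_eq_s_add_ck_succ_div hk hkm.le, pkF, Nat.add_sub_cancel]
  linarith

theorem pkF_lt_pkF {j k : ℕ} (hj : 1 ≤ j) (hjk : j < k) (hkm : k ≤ D.m) :
    D.pkF k < D.pkF j := by
  induction k, hjk using Nat.le_induction with
  | base => exact D.pkF_succ_lt hj hkm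
  | succ k hjk ih => exact (D.pkF_succ_lt (by omega) hkm).trans (ih (by omega))

theorem pkF_m : D.pkF D.m = D.pi := by
  rw [pkF, D.ck_m, muk, D.w_sum, div_one]
  ring

theorem pi_lt_pkF {k : ℕ} (hk : 1 ≤ k) (hkm : k < D.m) : D.pi < D.pkF k :=
  D.pkF_m ▸ D.pkF_lt_pkF hk hkm le_rfl

theorem s_add_ck_lt_pkF {k : ℕ} (hk : 2 ≤ k) (hkm : k < D.m) :
    D.s (k - 1) + D.ck k < D.pkF k := by
  have hμ := D.muk_pos (k := k) (by omega) hkm.le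
  have hc : D.ck k < D.ck k / D.muk k := by
    rw [lt_div_iff₀ hμ]
    nlinarith [D.ck_pos hk hkm.le, D.muk_lt_one hkm]
  rw [pkF]
  linarith

theorem qF_strictMonoOn {k : ℕ} (hk : 2 ≤ k) (hkm : k < D.m) :
    StrictMonoOn (D.qF k) (Set.Ici (D.pkF k)) := by
  have hqF : D.qF k = fun p => ((D.pi - D.ck k) * p - D.s (k - 1) * D.pi) /
      (p - (D.s (k - 1) + D.ck k)) := by
    funext p
    rw [qF, sub_sub]
  have hc := D.ck_pos hk hkm.le
  have hπ := D.pi_lt_s_add_ck (by omega) hkm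
  rw [hqF]
  refine (strictMonoOn_mul_sub_div_sub ?_).mono
    (Set.Ici_subset_Ioi.2 (D.s_add_ck_lt_pkF hk hkm))
  nlinarith [mul_pos hc (sub_pos.2 hπ)]

theorem qF_m {p : ℝ} (hp : p ≠ D.pi) : D.qF D.m p = D.s (D.m - 1) := by
  have hden : p - D.s (D.m - 1) - (D.pi - D.s (D.m - 1)) ≠ 0 := by
    rw [sub_sub_sub_cancel_right]
    exact sub_ne_zero.2 hp
  rw [qF, D.ck_m, div_eq_iff hden]
  ring

/-- Both formulas give the false omission rate `(π - μ_k p_k) / (1 - μ_k)` of the threshold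
classifier at `μ_k`. -/
theorem qF_pkF {k : ℕ} (hk : 2 ≤ k) (hkm : k < D.m) :
    D.qF k (D.pkF k) = D.qF (k + 1) (D.pkF k) := by
  have hμ := (D.muk_pos (k := k) (by omega) hkm.le).ne'
  have hμ1 := (D.muk_lt_one hkm).ne
  rw [qF, qF, Nat.add_sub_cancel,
    mul_sub_div_sub_eq_of_eq_add_div (D.ck_pos hk hkm.le).ne' hμ hμ1 (pkF.eq_1 D k),
    mul_sub_div_sub_eq_of_eq_add_div (D.ck_pos (by omega) hkm).ne' hμ hμ1
      (D.pkF_eq_s_add_ck_succ_div (by omega) hkm.le)]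

theorem pkF_le_pkF {j k : ℕ} (hj : 1 ≤ j) (hjk : j ≤ k) (hkm : k ≤ D.m) :
    D.pkF k ≤ D.pkF j :=
  hjk.eq_or_lt.elim (fun h => h ▸ le_rfl) (fun h => (D.pkF_lt_pkF hj h hkm).le)

/-- The index `k` with `p ∈ J_k`, for `π < p < s_1`. -/
noncomputable def breakIdx (p : ℝ) : ℕ := sInf {k | 2 ≤ k ∧ D.pkF k ≤ p}

theorem breakIdx_eq {k : ℕ} {p : ℝ} (hk : 2 ≤ k) (hkp : D.pkF k ≤ p)
    (hlt : ∀ j, 2 ≤ j → j < k → p < D.pkF j) : D.breakIdx p = k :=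
  le_antisymm (Nat.sInf_le ⟨hk, hkp⟩) <| le_csInf ⟨k, hk, hkp⟩ fun j ⟨hj, hjp⟩ =>
    not_lt.1 fun hjk => absurd (hlt j hj hjk) (not_lt.2 hjp)

theorem breakIdx_eq_of_mem_Ico {k : ℕ} {p : ℝ} (hk : 2 ≤ k) (hkm : k ≤ D.m)
    (hp : p ∈ Set.Ico (D.pkF k) (D.pkF (k - 1))) : D.breakIdx p = k :=
  D.breakIdx_eq hk hp.1 fun _ hj hjk =>
    hp.2.trans_le (D.pkF_le_pkF (by omega) (by omega) (by omega))

/-- `qF m` has its pole at `π`, so the value `s_m` there is set by hand. -/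
noncomputable def qBoundary (p : ℝ) : ℝ :=
  if p ≤ D.pi then D.s (D.m - 1) else D.qF (D.breakIdx p) p

theorem qBoundary_pi : D.qBoundary D.pi = D.s (D.m - 1) := if_pos le_rfl

theorem qBoundary_eq_qF {k : ℕ} {p : ℝ} (hk : 2 ≤ k) (hkm : k ≤ D.m) (hπ : D.pi < p)
    (hp : p ∈ Set.Ico (D.pkF k) (D.pkF (k - 1))) : D.qBoundary p = D.qF k p := by
  rw [qBoundary, if_neg hπ.not_ge, D.breakIdx_eq_of_mem_Ico hk hkm hp]

theorem qBoundary_pkF_pred {k : ℕ} (hk : 2 ≤ k) (hkm : k ≤ D.m) :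
    D.qBoundary (D.pkF (k - 1)) = D.qF k (D.pkF (k - 1)) := by
  have hπ : D.pi < D.pkF (k - 1) := D.pi_lt_pkF (by omega) (by omega)
  rcases hk.eq_or_lt with rfl | hk
  · rw [qBoundary, if_neg hπ.not_ge, D.breakIdx_eq le_rfl (D.pkF_succ_lt le_rfl D.one_lt_m).le
      fun j hj hj2 => absurd hj2 hj.not_gt]
  · obtain ⟨j, rfl⟩ : ∃ j, k = j + 1 := ⟨k - 1, by omega⟩
    rw [Nat.add_sub_cancel] at hπ ⊢
    rw [D.qBoundary_eq_qF (by omega) (by omega) hπ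
        ⟨le_rfl, D.pkF_lt_pkF (by omega) (by omega) (by omega)⟩,
      D.qF_pkF (by omega) (by omega)]

theorem qBoundary_eqOn_Icc {k : ℕ} (hk : 2 ≤ k) (hkm : k < D.m) :
    Set.EqOn D.qBoundary (D.qF k) (Set.Icc (D.pkF k) (D.pkF (k - 1))) := by
  intro p hp
  rcases hp.2.eq_or_lt with rfl | hlt
  · exact D.qBoundary_pkF_pred hk hkm.le
  · exact D.qBoundary_eq_qF hk hkm.le ((D.pi_lt_pkF (by omega) hkm).trans_le hp.1) ⟨hp.1, hlt⟩

theorem qBoundary_eq_of_le {p : ℝ} (hπ : D.pi ≤ p) (hp : p ≤ D.pkF (D.m - 1)) :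
    D.qBoundary p = D.s (D.m - 1) := by
  rcases hπ.eq_or_lt with rfl | hπ
  · exact D.qBoundary_pi
  rcases hp.eq_or_lt with rfl | hp
  · rw [D.qBoundary_pkF_pred D.one_lt_m le_rfl, D.qF_m hπ.ne']
  · rw [D.qBoundary_eq_qF D.one_lt_m le_rfl hπ ⟨D.pkF_m ▸ hπ.le, hp⟩, D.qF_m hπ.ne']

theorem qBoundary_continuousWithinAt_pi : ContinuousWithinAt D.qBoundary (Set.Ici D.pi) D.pi := by
  have hm := D.one_lt_m
  refine continuousWithinAt_const.congr_of_eventuallyEq ?_ D.qBoundary_pi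
  filter_upwards [Icc_mem_nhdsGE (D.pi_lt_pkF (k := D.m - 1) (by omega) (by omega))] with p hp
  exact D.qBoundary_eq_of_le hp.1 hp.2

theorem qBoundary_monotoneOn : MonotoneOn D.qBoundary (Set.Icc D.pi (D.s 0)) := by
  have hm := D.one_lt_m
  have h := monotoneOn_Icc_of_monotoneOn_Icc_succ (f := D.qBoundary)
    (a := fun k => D.pkF (k + 1)) (n := D.m - 1)
    (fun k hk => (D.pkF_succ_lt (by omega) (by omega)).le) fun k hk => ?_
  · rwa [Nat.sub_add_cancel hm.le, pkF_m, zero_add, pkF_one] at h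
  rcases (show k + 2 < D.m ∨ k + 2 = D.m by omega) with hkm | hkm
  · have hmono : MonotoneOn (D.qF (k + 2)) (Set.Icc (D.pkF (k + 2)) (D.pkF (k + 2 - 1))) :=
      (D.qF_strictMonoOn (by omega) hkm).monotoneOn.mono Set.Icc_subset_Ici_self
    exact hmono.congr (D.qBoundary_eqOn_Icc (by omega) hkm).symm
  · rw [show k + 1 + 1 = D.m by omega, pkF_m, show k + 1 = D.m - 1 by omega]
    exact monotoneOn_const.congr fun p hp => (D.qBoundary_eq_of_le hp.1 hp.2).symm

end CalibScore

/-- On each interval `J_k = [p_k, p_{k−1})` (for `1 < k < m`), the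
boundary function `q(p) = ((π − c_k) p − s_k π)/(p − s_k − c_k)` is strictly
increasing, while on `J_m = (π, p_{m−1})` it is constant and equal to `s_m`;
consequently the boundary curve `q(p)` extends continuously to `p = π` by setting
`q(π) := s_m`, and is nondecreasing on `[π, s_1)`. -/
theorem stmt4 (D : CalibScore) :
    (∀ k, 1 < k → k < D.m →
      StrictMonoOn (D.qF k) (Set.Ico (D.pkF k) (D.pkF (k - 1)))) ∧
    (∀ p ∈ Set.Ioo D.pi (D.pkF (D.m - 1)), D.qF D.m p = D.s (D.m - 1)) ∧
    (∃ Q : ℝ → ℝ,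
      Q D.pi = D.s (D.m - 1) ∧
      (∀ k, 1 < k → k < D.m → Set.EqOn Q (D.qF k) (Set.Ico (D.pkF k) (D.pkF (k - 1)))) ∧
      Set.EqOn Q (D.qF D.m) (Set.Ioo D.pi (D.pkF (D.m - 1))) ∧
      ContinuousWithinAt Q (Set.Ico D.pi (D.s 0)) D.pi ∧
      MonotoneOn Q (Set.Ico D.pi (D.s 0))) :=
  ⟨fun _ hk hkm => (D.qF_strictMonoOn hk hkm).mono Set.Ico_subset_Ici_self,
    fun _ hp => D.qF_m hp.1.ne',
    D.qBoundary, D.qBoundary_pi,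
    fun _ hk hkm => (D.qBoundary_eqOn_Icc hk hkm).mono Set.Ico_subset_Icc_self,
    fun _ hp => D.qBoundary_eq_qF D.one_lt_m le_rfl hp.1 ⟨D.pkF_m ▸ hp.1.le, hp.2⟩,
    D.qBoundary_continuousWithinAt_pi.mono Set.Ico_subset_Ici_self,
    D.qBoundary_monotoneOn.mono Set.Ico_subset_Icc_self⟩
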